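/- arXiv:1111.1433 — 4 statements merged into one kernel-verified Lean document; each statement's English description precedes it below -/
import Mathlib

section
/- Let S = ⟨n_1,n_2,n_3⟩ be a numerical semigroup minimally generated by n_1 < n_2 < n_3 with gcd(n_1,n_2,n_3)=1 which is not symmetric, with c_i and r_{i,j} as in the standard setup, and let T(S) = {g_1, g_2} with g_1 = g(S). (i) If g_1 = (c_2−1)n_2 + (r_{1,3}−1)n_3 − n_1, then g_1 − g_2 = r_{1,3}r_{2,1}r_{3,2} − r_{1,2}r_{2,3}r_{3,1}. (ii) If g_1 = (c_3−1)n_3 + (r_{1,2}−1)n_2 − n_1, then g_1 − g_2 = r_{1,2}r_{2,3}r_{3,1} − r_{1,3}r_{2,1}r_{3,2}. -/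
/-- Membership of an integer in an additive submonoid of `ℕ`, viewed inside `ℤ`
via the inclusion `ℕ ⊆ ℤ`. -/
def AddSubmonoid.zmem (S : AddSubmonoid ℕ) (x : ℤ) : Prop :=
  ∃ n : ℕ, n ∈ S ∧ (n : ℤ) = x

/-- The Frobenius number `g(S) = max {x ∈ ℤ : x ∉ S}` of a numerical semigroup. -/
noncomputable def frobeniusNumber (S : AddSubmonoid ℕ) : ℤ :=
  sSup {x : ℤ | ¬ S.zmem x}

/-- The set of pseudo-Frobenius numbers
`T(S) = {x ∈ ℤ \ S : x + s ∈ S for all s ∈ S, s ≠ 0}`. -/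
def pseudoFrobeniusSet (S : AddSubmonoid ℕ) : Set ℤ :=
  {x : ℤ | ¬ S.zmem x ∧ ∀ s ∈ S, s ≠ 0 → S.zmem (x + s)}

/-!
Minimality of the `cᵢ` gives `r_ji < c_i`, and then Herzog's relations `c_i = r_ji + r_ki`.
With them, no integer point `(x, y)` with `x < c₂`, `y < c₃` and `(x < r₁₂ ∨ y < r₁₃)` has
`x n₂ + y n₃` a positive multiple of `n₁`. On the one hand this makes both candidates
`(c₂ - 1) n₂ + (r₁₃ - 1) n₃ - n₁` and `(c₃ - 1) n₃ + (r₁₂ - 1) n₂ - n₁` pseudo-Frobenius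
numbers, so they are `g₁` and `g₂`. On the other hand, the staircase
`[0, c₂) × [0, c₃) \ [r₁₂, c₂) × [r₁₃, c₃)` meets every coset of the lattice spanned by
`(c₂, -r₂₃)` and `(-r₃₂, c₃)`, so this lattice is all of `{(x, y) : n₁ ∣ x n₂ + y n₃}`, which has
index `n₁` as `gcd (n₁, n₂, n₃) = 1`. Comparing with its determinant `c₂ c₃ - r₂₃ r₃₂` gives
`n₂ = r₂₁ c₃ + r₂₃ r₃₁` and `n₃ = r₃₁ c₂ + r₃₂ r₂₁`, and the difference `r₃₂ n₂ - r₂₃ n₃` of the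
candidates becomes `r₁₃ r₂₁ r₃₂ - r₁₂ r₂₃ r₃₁`. Exchanging `n₂` and `n₃` exchanges the candidates.
-/

namespace AddSubmonoid

theorem zmem_closure_triple_iff {a b c : ℕ} {x : ℤ} :
    (closure {a, b, c}).zmem x ↔
      ∃ p q r : ℤ, 0 ≤ p ∧ 0 ≤ q ∧ 0 ≤ r ∧ x = p * a + q * b + r * c := by
  constructor
  · rintro ⟨n, hn, rfl⟩
    induction hn using closure_induction with
    | mem y hy =>
      rcases hy with rfl | rfl | rfl
      exacts [⟨1, 0, 0, by simp⟩, ⟨0, 1, 0, by simp⟩, ⟨0, 0, 1, by simp⟩]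
    | zero => exact ⟨0, 0, 0, by simp⟩
    | add y z _ _ hy hz =>
      obtain ⟨p, q, r, hp, hq, hr, hy⟩ := hy
      obtain ⟨p', q', r', hp', hq', hr', hz⟩ := hz
      exact ⟨p + p', q + q', r + r', by positivity, by positivity, by positivity,
        by push_cast; linear_combination hy + hz⟩
  · rintro ⟨p, q, r, hp, hq, hr, rfl⟩
    lift p to ℕ using hp
    lift q to ℕ using hq
    lift r to ℕ using hr
    have mul_mem : ∀ g ∈ ({a, b, c} : Set ℕ), ∀ k : ℕ, k * g ∈ closure {a, b, c} :=
      fun g hg k => by simpa using nsmul_mem (subset_closure hg) k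
    exact ⟨p * a + q * b + r * c,
      add_mem (add_mem (mul_mem a (by simp) p) (mul_mem b (by simp) q)) (mul_mem c (by simp) r),
      by push_cast; ring⟩

theorem eq_zero_or_exists_add_of_mem_closure {M : Type*} [AddMonoid M] {G : Set M} {s : M}
    (hs : s ∈ closure G) : s = 0 ∨ ∃ g ∈ G, ∃ t ∈ closure G, s = g + t := by
  induction hs using closure_induction_left with
  | zero => exact Or.inl rfl
  | add_left g hg t ht _ => exact Or.inr ⟨g, hg, t, ht, rfl⟩

theorem mem_pseudoFrobeniusSet_closure {G : Set ℕ} {x : ℤ} (hx : ¬ (closure G).zmem x)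
    (hG : ∀ g ∈ G, (closure G).zmem (x + g)) : x ∈ pseudoFrobeniusSet (closure G) := by
  refine ⟨hx, fun s hs hs0 => ?_⟩
  obtain ⟨g, hg, t, ht, rfl⟩ := (eq_zero_or_exists_add_of_mem_closure hs).resolve_left hs0
  obtain ⟨n, hn, hnx⟩ := hG g hg
  exact ⟨n + t, add_mem hn ht, by push_cast; rw [hnx]; ring⟩

end AddSubmonoid

def MultiplesLowerBound (c x y z : ℤ) : Prop :=
  ∀ m p q : ℤ, 0 < m → 0 ≤ p → 0 ≤ q → m * x = p * y + q * z → c ≤ m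

theorem MultiplesLowerBound.comm {c x y z : ℤ} (h : MultiplesLowerBound c x y z) :
    MultiplesLowerBound c x z y :=
  fun m p q hm hp hq hmul => h m q p hm hq hp (by rw [hmul, add_comm])

theorem multiplesLowerBound_of_closure {c x y z : ℕ}
    (h : ∀ m : ℕ, 0 < m → m * x ∈ AddSubmonoid.closure {y, z} → c ≤ m) :
    MultiplesLowerBound c x y z := by
  intro m p q hm hp hq hmul
  lift m to ℕ using hm.le
  lift p to ℕ using hp
  lift q to ℕ using hq
  exact_mod_cast h m (by exact_mod_cast hm) ((AddSubmonoid.mem_closure_pair y z _).2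
    ⟨p, q, by simp only [smul_eq_mul]; exact_mod_cast hmul.symm⟩)

theorem MultiplesLowerBound.lt {x y z cx cy a b d f : ℤ} (hmin : MultiplesLowerBound cx x y z)
    (hx : 0 < x) (hy : 0 ≤ y) (hz : 0 < z) (hb : 0 < b) (hd : 0 < d) (hf : 0 ≤ f)
    (hcx : cx * x = a * y + b * z) (hcy : cy * y = d * x + f * z) : a < cy := by
  by_contra! ha
  have heq : (cx - d) * x = (a - cy) * y + (b + f) * z := by linear_combination hcx + hcy
  have hpos : 0 < (cx - d) * x :=
    heq ▸ add_pos_of_nonneg_of_pos (mul_nonneg (sub_nonneg.2 ha) hy) (mul_pos (by linarith) hz)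
  have := hmin (cx - d) (a - cy) (b + f) (pos_of_mul_pos_left hpos hx.le) (sub_nonneg.2 ha)
    (by linarith) heq
  linarith

theorem exists_staircase_rep_of_nonneg {α β γ δ : ℤ} (hα : 0 < α) (hβ : 0 ≤ β) (hγ : 0 < γ)
    (hδ : 0 ≤ δ) {x y : ℤ} (hx : 0 ≤ x) (hy : 0 ≤ y) (hyγδ : y < γ + δ) :
    ∃ a b x' y' : ℤ, x = x' + a * (α + β) - b * β ∧ y = y' + b * (γ + δ) - a * δ ∧
      0 ≤ x' ∧ x' < α + β ∧ 0 ≤ y' ∧ y' < γ + δ ∧ (x' < α ∨ y' < γ) := by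
  induction hn : x.toNat using Nat.strong_induction_on generalizing x y with
  | _ n ih =>
  by_cases hstop : x < α + β ∧ (x < α ∨ y < γ)
  · exact ⟨0, 0, x, y, by ring, by ring, hx, hstop.1, hy, hyγδ, hstop.2⟩
  rcases lt_or_ge y γ with hyγ | hyγ
  · have hx' : α + β ≤ x := not_lt.1 fun h => hstop ⟨h, Or.inr hyγ⟩
    obtain ⟨a, b, x', y', h₁, h₂, hbox⟩ := ih _ (by omega) (x := x - (α + β)) (y := y + δ)
      (by linarith) (by linarith) (by linarith) rfl
    exact ⟨a + 1, b, x', y', by linear_combination h₁, by linear_combination h₂, hbox⟩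
  · have hx' : α ≤ x := not_lt.1 fun h => hstop ⟨by linarith, Or.inl h⟩
    obtain ⟨a, b, x', y', h₁, h₂, hbox⟩ := ih _ (by omega) (x := x - α) (y := y - γ)
      (by linarith) (by linarith) (by linarith) rfl
    exact ⟨a + 1, b + 1, x', y', by linear_combination h₁, by linear_combination h₂, hbox⟩

theorem exists_staircase_rep {α β γ δ : ℤ} (hα : 0 < α) (hβ : 0 ≤ β) (hγ : 0 < γ) (hδ : 0 ≤ δ)
    (X Y : ℤ) :
    ∃ a b x y : ℤ, X = x + a * (α + β) - b * β ∧ Y = y + b * (γ + δ) - a * δ ∧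
      0 ≤ x ∧ x < α + β ∧ 0 ≤ y ∧ y < γ + δ ∧ (x < α ∨ y < γ) := by
  -- shift by `k (α, γ)` into the positive quadrant, then reduce `y` modulo `γ + δ`
  set k := |X| + |Y|
  have hkα : k ≤ k * α := le_mul_of_one_le_right (by positivity) (by omega)
  have hkγ : k ≤ k * γ := le_mul_of_one_le_right (by positivity) (by omega)
  have hγδ : 0 < γ + δ := by linarith
  have hY : 0 ≤ Y + k * γ := by linarith [neg_abs_le Y, abs_nonneg X]
  set t := (Y + k * γ) / (γ + δ)
  have ht : 0 ≤ t := Int.ediv_nonneg hY hγδ.le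
  obtain ⟨a, b, x, y, h₁, h₂, hbox⟩ := exists_staircase_rep_of_nonneg hα hβ hγ hδ
    (x := X + k * α + t * β) (y := (Y + k * γ) % (γ + δ))
    (by nlinarith [neg_abs_le X, abs_nonneg Y, mul_nonneg ht hβ])
    (Int.emod_nonneg _ hγδ.ne') (Int.emod_lt_of_pos _ hγδ)
  exact ⟨a - k, b - k + t, x, y, by linear_combination h₁,
    by linear_combination h₂ - Int.emod_def (Y + k * γ) (γ + δ), hbox⟩

structure StandardSetup (n₁ n₂ n₃ : ℤ) where
  (c₁ c₂ c₃ r₁₂ r₁₃ r₂₁ r₂₃ r₃₁ r₃₂ : ℤ)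
  n₁_pos : 0 < n₁
  n₂_pos : 0 < n₂
  n₃_pos : 0 < n₃
  r₁₂_pos : 0 < r₁₂
  r₁₃_pos : 0 < r₁₃
  r₂₁_pos : 0 < r₂₁
  r₂₃_pos : 0 < r₂₃
  r₃₁_pos : 0 < r₃₁
  r₃₂_pos : 0 < r₃₂
  eq₁ : c₁ * n₁ = r₁₂ * n₂ + r₁₃ * n₃
  eq₂ : c₂ * n₂ = r₂₁ * n₁ + r₂₃ * n₃
  eq₃ : c₃ * n₃ = r₃₁ * n₁ + r₃₂ * n₂
  min₁ : MultiplesLowerBound c₁ n₁ n₂ n₃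
  min₂ : MultiplesLowerBound c₂ n₂ n₁ n₃
  min₃ : MultiplesLowerBound c₃ n₃ n₁ n₂

namespace StandardSetup

variable {n₁ n₂ n₃ : ℤ} (C : StandardSetup n₁ n₂ n₃)

def swap : StandardSetup n₁ n₃ n₂ where
  c₁ := C.c₁
  c₂ := C.c₃
  c₃ := C.c₂
  r₁₂ := C.r₁₃
  r₁₃ := C.r₁₂
  r₂₁ := C.r₃₁
  r₂₃ := C.r₃₂
  r₃₁ := C.r₂₁
  r₃₂ := C.r₂₃
  n₁_pos := C.n₁_pos
  n₂_pos := C.n₃_pos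
  n₃_pos := C.n₂_pos
  r₁₂_pos := C.r₁₃_pos
  r₁₃_pos := C.r₁₂_pos
  r₂₁_pos := C.r₃₁_pos
  r₂₃_pos := C.r₃₂_pos
  r₃₁_pos := C.r₂₁_pos
  r₃₂_pos := C.r₂₃_pos
  eq₁ := by linear_combination C.eq₁
  eq₂ := C.eq₃
  eq₃ := C.eq₂
  min₁ := C.min₁.comm
  min₂ := C.min₃
  min₃ := C.min₂

theorem r₁₂_lt_c₂ : C.r₁₂ < C.c₂ :=
  C.min₁.lt C.n₁_pos C.n₂_pos.le C.n₃_pos C.r₁₃_pos C.r₂₁_pos C.r₂₃_pos.le C.eq₁ C.eq₂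

theorem r₂₁_lt_c₁ : C.r₂₁ < C.c₁ :=
  C.min₂.lt C.n₂_pos C.n₁_pos.le C.n₃_pos C.r₂₃_pos C.r₁₂_pos C.r₁₃_pos.le C.eq₂ C.eq₁

theorem r₂₃_lt_c₃ : C.r₂₃ < C.c₃ :=
  C.min₂.comm.lt C.n₂_pos C.n₃_pos.le C.n₁_pos C.r₂₁_pos C.r₃₂_pos C.r₃₁_pos.le
    (by linear_combination C.eq₂) (by linear_combination C.eq₃)

theorem r₃₂_lt_c₂ : C.r₃₂ < C.c₂ := C.swap.r₂₃_lt_c₃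

theorem r₃₁_lt_c₁ : C.r₃₁ < C.c₁ := C.swap.r₂₁_lt_c₁

theorem r₁₃_lt_c₃ : C.r₁₃ < C.c₃ := C.swap.r₁₂_lt_c₂

theorem c₁_le : C.c₁ ≤ C.r₂₁ + C.r₃₁ :=
  C.min₁ _ (C.c₂ - C.r₃₂) (C.c₃ - C.r₂₃) (by linarith [C.r₂₁_pos, C.r₃₁_pos])
    (sub_nonneg.2 C.r₃₂_lt_c₂.le) (sub_nonneg.2 C.r₂₃_lt_c₃.le)
    (by linear_combination (-1 : ℤ) * C.eq₂ - C.eq₃)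

theorem c₂_le : C.c₂ ≤ C.r₁₂ + C.r₃₂ :=
  C.min₂ _ (C.c₁ - C.r₃₁) (C.c₃ - C.r₁₃) (by linarith [C.r₁₂_pos, C.r₃₂_pos])
    (sub_nonneg.2 C.r₃₁_lt_c₁.le) (sub_nonneg.2 C.r₁₃_lt_c₃.le)
    (by linear_combination (-1 : ℤ) * C.eq₁ - C.eq₃)

theorem c₃_le : C.c₃ ≤ C.r₁₃ + C.r₂₃ := C.swap.c₂_le

theorem c₂_eq : C.c₂ = C.r₁₂ + C.r₃₂ := by
  refine le_antisymm C.c₂_le (not_lt.1 fun h => ?_)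
  -- the three defects `r_ji + r_ki - c_i ≥ 0` weighted by the `nᵢ` sum to zero
  have h₁ := mul_nonneg (sub_nonneg.2 C.c₁_le) C.n₁_pos.le
  have h₂ := mul_pos (sub_pos.2 h) C.n₂_pos
  have h₃ := mul_nonneg (sub_nonneg.2 C.c₃_le) C.n₃_pos.le
  linarith [C.eq₁, C.eq₂, C.eq₃]

theorem c₃_eq : C.c₃ = C.r₁₃ + C.r₂₃ := C.swap.c₂_eq

theorem mul_add_mul_ne_of_lt_r₁₂ {X Y M : ℤ} (hX : X < C.r₁₂) (hY : Y < C.c₃) (hM : 0 < M) :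
    X * n₂ + Y * n₃ ≠ M * n₁ := by
  intro h
  have hMn₁ := mul_pos hM C.n₁_pos
  rcases le_or_gt Y 0 with hY₀ | hY₀
  · have hX₀ : 0 < X := by nlinarith [C.n₂_pos, C.n₃_pos]
    have := C.min₂ X M (-Y) hX₀ hM.le (by linarith) (by linear_combination h)
    linarith [C.r₁₂_lt_c₂]
  rcases le_or_gt X 0 with hX₀ | hX₀
  · have := C.min₃ Y M (-X) hY₀ hM.le (by linarith) (by linear_combination h)
    linarith
  have hc₁ := C.min₁ M X Y hM hX₀.le hY₀.le h.symm
  have heq : (Y - C.r₁₃) * n₃ = (M - C.c₁) * n₁ + (C.r₁₂ - X) * n₂ := by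
    linear_combination h + C.eq₁
  have hpos : 0 < (Y - C.r₁₃) * n₃ := heq ▸ add_pos_of_nonneg_of_pos
    (mul_nonneg (sub_nonneg.2 hc₁) C.n₁_pos.le) (mul_pos (sub_pos.2 hX) C.n₂_pos)
  have := C.min₃ _ _ _ (pos_of_mul_pos_left hpos C.n₃_pos.le) (sub_nonneg.2 hc₁)
    (sub_nonneg.2 hX.le) heq
  linarith [C.r₁₃_pos]

theorem mul_add_mul_ne {X Y M : ℤ} (hX : X < C.c₂) (hY : Y < C.c₃)
    (hXY : X < C.r₁₂ ∨ Y < C.r₁₃) (hM : 0 < M) : X * n₂ + Y * n₃ ≠ M * n₁ := by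
  rcases hXY with h | h
  · exact C.mul_add_mul_ne_of_lt_r₁₂ h hY hM
  · rw [add_comm]
    exact C.swap.mul_add_mul_ne_of_lt_r₁₂ h hX hM

theorem exists_eq_of_dvd {X Y : ℤ} (h : n₁ ∣ X * n₂ + Y * n₃) :
    ∃ a b : ℤ, X = a * C.c₂ - b * C.r₃₂ ∧ Y = b * C.c₃ - a * C.r₂₃ := by
  obtain ⟨a, b, x, y, rfl, rfl, hx₀, hx, hy₀, hy, hxy⟩ :=
    exists_staircase_rep C.r₁₂_pos C.r₃₂_pos.le C.r₁₃_pos C.r₂₃_pos.le X Y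
  rw [← C.c₂_eq, ← C.c₃_eq] at *
  obtain ⟨m, hm⟩ := h
  have hM : x * n₂ + y * n₃ = (m - a * C.r₂₁ - b * C.r₃₁) * n₁ := by
    linear_combination hm - a * C.eq₂ - b * C.eq₃
  have hx₂ := mul_nonneg hx₀ C.n₂_pos.le
  have hy₃ := mul_nonneg hy₀ C.n₃_pos.le
  have hzero : x * n₂ + y * n₃ = 0 := by
    by_contra hne
    have hpos : 0 < x * n₂ + y * n₃ := lt_of_le_of_ne (by positivity) (Ne.symm hne)
    exact C.mul_add_mul_ne hx hy hxy (pos_of_mul_pos_left (hM ▸ hpos) C.n₁_pos.le) hM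
  have hx0 : x = 0 := (mul_eq_zero.1 (by linarith : x * n₂ = 0)).resolve_right C.n₂_pos.ne'
  have hy0 : y = 0 := (mul_eq_zero.1 (by linarith : y * n₃ = 0)).resolve_right C.n₃_pos.ne'
  exact ⟨a, b, by rw [hx0]; ring, by rw [hy0]; ring⟩

theorem exists_n₁_eq_mul_det : ∃ k : ℤ, n₁ = k * (C.c₂ * C.c₃ - C.r₂₃ * C.r₃₂) := by
  obtain ⟨u₂, hu₂⟩ := Int.gcd_dvd_left n₂ n₃
  obtain ⟨u₃, hu₃⟩ := Int.gcd_dvd_right n₂ n₃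
  have hg : (Int.gcd n₂ n₃ : ℤ) ≠ 0 := by
    exact_mod_cast (Int.gcd_pos_of_ne_zero_left n₃ C.n₂_pos.ne').ne'
  set α := Int.gcdA n₂ n₃
  set β := Int.gcdB n₂ n₃
  have hbez : u₂ * α + u₃ * β = 1 := mul_left_cancel₀ hg (by
    linear_combination (-1 : ℤ) * Int.gcd_eq_gcd_ab n₂ n₃ - α * hu₂ - β * hu₃)
  -- `(u₃, -u₂)` and `(α n₁, β n₁)` are in the lattice, with determinant `n₁`
  obtain ⟨a₁, b₁, h₁, h₁'⟩ := C.exists_eq_of_dvd (X := u₃) (Y := -u₂)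
    ⟨0, by linear_combination u₃ * hu₂ - u₂ * hu₃⟩
  obtain ⟨a₂, b₂, h₂, h₂'⟩ := C.exists_eq_of_dvd (X := α * n₁) (Y := β * n₁)
    ⟨α * n₂ + β * n₃, by ring⟩
  exact ⟨a₁ * b₂ - a₂ * b₁, by
    linear_combination (-n₁) * hbez + (β * n₁) * h₁ + (a₁ * C.c₂ - b₁ * C.r₃₂) * h₂'
      - (α * n₁) * h₁' - (b₁ * C.c₃ - a₁ * C.r₂₃) * h₂⟩

theorem n₂_eq_and_n₃_eq (hgcd : Int.gcd n₁ (Int.gcd n₂ n₃) = 1) :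
    n₂ = C.r₂₁ * C.c₃ + C.r₂₃ * C.r₃₁ ∧ n₃ = C.r₃₁ * C.c₂ + C.r₃₂ * C.r₂₁ := by
  obtain ⟨k, hk⟩ := C.exists_n₁_eq_mul_det
  have he : C.c₂ * C.c₃ - C.r₂₃ * C.r₃₂ ≠ 0 := right_ne_zero_of_mul (hk ▸ C.n₁_pos.ne')
  have h₂ : n₂ = k * (C.r₂₁ * C.c₃ + C.r₂₃ * C.r₃₁) := mul_left_cancel₀ he (by
    linear_combination C.c₃ * C.eq₂ + C.r₂₃ * C.eq₃ + (C.r₂₁ * C.c₃ + C.r₂₃ * C.r₃₁) * hk)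
  have h₃ : n₃ = k * (C.r₃₁ * C.c₂ + C.r₃₂ * C.r₂₁) := mul_left_cancel₀ he (by
    linear_combination C.c₂ * C.eq₃ + C.r₃₂ * C.eq₂ + (C.r₃₁ * C.c₂ + C.r₃₂ * C.r₂₁) * hk)
  have hk₀ : 0 < k := pos_of_mul_pos_left (h₂ ▸ C.n₂_pos) (add_nonneg
    (mul_nonneg C.r₂₁_pos.le (by linarith [C.r₂₃_lt_c₃, C.r₂₃_pos]))
    (mul_nonneg C.r₂₃_pos.le C.r₃₁_pos.le))
  have hk₁ : k = 1 := Int.eq_one_of_dvd_one hk₀.le (by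
    simpa [hgcd] using Int.dvd_coe_gcd (Dvd.intro _ hk.symm)
      (Int.dvd_coe_gcd (Dvd.intro _ h₂.symm) (Dvd.intro _ h₃.symm)))
  subst hk₁
  exact ⟨by linarith, by linarith⟩

def pseudoFrobenius : ℤ := (C.c₂ - 1) * n₂ + (C.r₁₃ - 1) * n₃ - n₁

theorem pseudoFrobenius_sub_swap_eq :
    C.pseudoFrobenius - C.swap.pseudoFrobenius = C.r₃₂ * n₂ - C.r₂₃ * n₃ := by
  dsimp only [pseudoFrobenius, swap]
  linear_combination n₂ * C.c₂_eq - n₃ * C.c₃_eq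

theorem pseudoFrobenius_ne_swap : C.pseudoFrobenius ≠ C.swap.pseudoFrobenius := by
  intro h
  have := C.min₃ C.r₁₃ C.r₃₁ 0 C.r₁₃_pos C.r₃₁_pos.le le_rfl (by
    linear_combination C.eq₃ - n₃ * C.c₃_eq - C.pseudoFrobenius_sub_swap_eq + sub_eq_zero.2 h)
  linarith [C.r₁₃_lt_c₃]

theorem pseudoFrobenius_sub_swap (hgcd : Int.gcd n₁ (Int.gcd n₂ n₃) = 1) :
    C.pseudoFrobenius - C.swap.pseudoFrobenius =
      C.r₁₃ * C.r₂₁ * C.r₃₂ - C.r₁₂ * C.r₂₃ * C.r₃₁ := by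
  obtain ⟨h₂, h₃⟩ := C.n₂_eq_and_n₃_eq hgcd
  linear_combination C.pseudoFrobenius_sub_swap_eq + C.r₃₂ * h₂ - C.r₂₃ * h₃
    + C.r₂₁ * C.r₃₂ * C.c₃_eq - C.r₂₃ * C.r₃₁ * C.c₂_eq

theorem pseudoFrobenius_mem {a b c : ℕ} (C : StandardSetup a b c) :
    C.pseudoFrobenius ∈ pseudoFrobeniusSet (AddSubmonoid.closure {a, b, c}) := by
  have := C.r₁₂_pos; have := C.r₁₃_pos; have := C.r₂₁_pos; have := C.r₂₃_pos
  have := C.r₂₁_lt_c₁; have := C.r₁₂_lt_c₂; have := C.r₁₃_lt_c₃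
  refine AddSubmonoid.mem_pseudoFrobeniusSet_closure ?_ ?_
  · rw [AddSubmonoid.zmem_closure_triple_iff]
    rintro ⟨p, q, r, hp, hq, hr, h⟩
    exact C.mul_add_mul_ne (X := C.c₂ - 1 - q) (Y := C.r₁₃ - 1 - r) (M := p + 1)
      (by linarith) (by linarith) (Or.inr (by linarith)) (by linarith)
      (by unfold pseudoFrobenius at h; linear_combination h)
  · rintro g (rfl | rfl | rfl) <;> rw [AddSubmonoid.zmem_closure_triple_iff] <;>
      unfold pseudoFrobenius
    · exact ⟨0, C.c₂ - 1, C.r₁₃ - 1, le_rfl, by linarith, by linarith, by ring⟩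
    · exact ⟨C.r₂₁ - 1, 0, C.r₁₃ + C.r₂₃ - 1, by linarith, le_rfl, by linarith,
        by linear_combination C.eq₂⟩
    · exact ⟨C.c₁ - 1, C.c₂ - 1 - C.r₁₂, 0, by linarith, by linarith, le_rfl,
        by linear_combination -C.eq₁⟩

end StandardSetup

theorem stmt11_general
    (n₁ n₂ n₃ : ℕ)
    (h1 : 0 < n₁) (h12 : n₁ < n₂) (h23 : n₂ < n₃)
    (hgcd : Nat.gcd n₁ (Nat.gcd n₂ n₃) = 1)
    (S : AddSubmonoid ℕ) (hS : S = AddSubmonoid.closure {n₁, n₂, n₃})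
    (c₁ c₂ c₃ : ℕ)
    (hc₁ : 0 < c₁ ∧ c₁ * n₁ ∈ AddSubmonoid.closure {n₂, n₃} ∧
      ∀ c : ℕ, 0 < c → c * n₁ ∈ AddSubmonoid.closure {n₂, n₃} → c₁ ≤ c)
    (hc₂ : 0 < c₂ ∧ c₂ * n₂ ∈ AddSubmonoid.closure {n₁, n₃} ∧
      ∀ c : ℕ, 0 < c → c * n₂ ∈ AddSubmonoid.closure {n₁, n₃} → c₂ ≤ c)
    (hc₃ : 0 < c₃ ∧ c₃ * n₃ ∈ AddSubmonoid.closure {n₁, n₂} ∧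
      ∀ c : ℕ, 0 < c → c * n₃ ∈ AddSubmonoid.closure {n₁, n₂} → c₃ ≤ c)
    (r₁₂ r₁₃ r₂₁ r₂₃ r₃₁ r₃₂ : ℕ)
    (hr₁ : 0 < r₁₂ ∧ 0 < r₁₃ ∧ c₁ * n₁ = r₁₂ * n₂ + r₁₃ * n₃)
    (hr₂ : 0 < r₂₁ ∧ 0 < r₂₃ ∧ c₂ * n₂ = r₂₁ * n₁ + r₂₃ * n₃)
    (hr₃ : 0 < r₃₁ ∧ 0 < r₃₂ ∧ c₃ * n₃ = r₃₁ * n₁ + r₃₂ * n₂)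
    (g₁ g₂ : ℤ) (hT : pseudoFrobeniusSet S = {g₁, g₂}) :
    (g₁ = ((c₂ : ℤ) - 1) * n₂ + ((r₁₃ : ℤ) - 1) * n₃ - n₁ →
      g₁ - g₂ = (r₁₃ : ℤ) * r₂₁ * r₃₂ - (r₁₂ : ℤ) * r₂₃ * r₃₁) ∧
    (g₁ = ((c₃ : ℤ) - 1) * n₃ + ((r₁₂ : ℤ) - 1) * n₂ - n₁ →
      g₁ - g₂ = (r₁₂ : ℤ) * r₂₃ * r₃₁ - (r₁₃ : ℤ) * r₂₁ * r₃₂) := by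
  let C : StandardSetup n₁ n₂ n₃ :=
    { c₁ := c₁, c₂ := c₂, c₃ := c₃, r₁₂ := r₁₂, r₁₃ := r₁₃, r₂₁ := r₂₁, r₂₃ := r₂₃,
      r₃₁ := r₃₁, r₃₂ := r₃₂
      n₁_pos := by omega, n₂_pos := by omega, n₃_pos := by omega
      r₁₂_pos := by omega, r₁₃_pos := by omega, r₂₁_pos := by omega
      r₂₃_pos := by omega, r₃₁_pos := by omega, r₃₂_pos := by omega
      eq₁ := by exact_mod_cast hr₁.2.2, eq₂ := by exact_mod_cast hr₂.2.2
      eq₃ := by exact_mod_cast hr₃.2.2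
      min₁ := multiplesLowerBound_of_closure hc₁.2.2
      min₂ := multiplesLowerBound_of_closure hc₂.2.2
      min₃ := multiplesLowerBound_of_closure hc₃.2.2 }
  have hA := C.pseudoFrobenius_mem
  have hB := C.swap.pseudoFrobenius_mem
  rw [Set.pair_comm, ← hS, hT] at hB
  rw [← hS, hT] at hA
  have hne := C.pseudoFrobenius_ne_swap
  have hdiff := C.pseudoFrobenius_sub_swap (by simpa [Int.gcd_natCast_natCast] using hgcd)
  refine ⟨fun (hg : g₁ = C.pseudoFrobenius) => ?_, fun (hg : g₁ = C.swap.pseudoFrobenius) => ?_⟩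
  · obtain rfl : C.swap.pseudoFrobenius = g₂ :=
      (Set.mem_insert_iff.1 hB).resolve_left fun h => hne (hg.symm.trans h.symm)
    rw [hg]
    exact hdiff
  · obtain rfl : C.pseudoFrobenius = g₂ :=
      (Set.mem_insert_iff.1 hA).resolve_left fun h => hne (h.trans hg)
    rw [hg]
    linear_combination -hdiff

/-- with `T(S) = {g₁, g₂}`, `g₁ = g(S)`:
(i) if `g₁ = (c₂−1)n₂ + (r₁₃−1)n₃ − n₁` then `g₁ − g₂ = r₁₃r₂₁r₃₂ − r₁₂r₂₃r₃₁`;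
(ii) if `g₁ = (c₃−1)n₃ + (r₁₂−1)n₂ − n₁` then `g₁ − g₂ = r₁₂r₂₃r₃₁ − r₁₃r₂₁r₃₂`. -/
theorem stmt11
    (n₁ n₂ n₃ : ℕ)
    (h1 : 0 < n₁) (h12 : n₁ < n₂) (h23 : n₂ < n₃)
    (hgcd : Nat.gcd n₁ (Nat.gcd n₂ n₃) = 1)
    (hmin1 : n₁ ∉ AddSubmonoid.closure {n₂, n₃})
    (hmin2 : n₂ ∉ AddSubmonoid.closure {n₁, n₃})
    (hmin3 : n₃ ∉ AddSubmonoid.closure {n₁, n₂})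
    (S : AddSubmonoid ℕ) (hS : S = AddSubmonoid.closure {n₁, n₂, n₃})
    (hnotsym : ¬ ∀ x : ℤ, ¬ S.zmem x ↔ S.zmem (frobeniusNumber S - x))
    (c₁ c₂ c₃ : ℕ)
    (hc₁ : 0 < c₁ ∧ c₁ * n₁ ∈ AddSubmonoid.closure {n₂, n₃} ∧
      ∀ c : ℕ, 0 < c → c * n₁ ∈ AddSubmonoid.closure {n₂, n₃} → c₁ ≤ c)
    (hc₂ : 0 < c₂ ∧ c₂ * n₂ ∈ AddSubmonoid.closure {n₁, n₃} ∧
      ∀ c : ℕ, 0 < c → c * n₂ ∈ AddSubmonoid.closure {n₁, n₃} → c₂ ≤ c)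
    (hc₃ : 0 < c₃ ∧ c₃ * n₃ ∈ AddSubmonoid.closure {n₁, n₂} ∧
      ∀ c : ℕ, 0 < c → c * n₃ ∈ AddSubmonoid.closure {n₁, n₂} → c₃ ≤ c)
    (r₁₂ r₁₃ r₂₁ r₂₃ r₃₁ r₃₂ : ℕ)
    (hr₁ : 0 < r₁₂ ∧ 0 < r₁₃ ∧ c₁ * n₁ = r₁₂ * n₂ + r₁₃ * n₃)
    (hr₂ : 0 < r₂₁ ∧ 0 < r₂₃ ∧ c₂ * n₂ = r₂₁ * n₁ + r₂₃ * n₃)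
    (hr₃ : 0 < r₃₁ ∧ 0 < r₃₂ ∧ c₃ * n₃ = r₃₁ * n₁ + r₃₂ * n₂)
    (g₁ g₂ : ℤ) (hT : pseudoFrobeniusSet S = {g₁, g₂})
    (hg₁ : g₁ = frobeniusNumber S) :
    (g₁ = ((c₂ : ℤ) - 1) * n₂ + ((r₁₃ : ℤ) - 1) * n₃ - n₁ →
      g₁ - g₂ = (r₁₃ : ℤ) * r₂₁ * r₃₂ - (r₁₂ : ℤ) * r₂₃ * r₃₁) ∧
    (g₁ = ((c₃ : ℤ) - 1) * n₃ + ((r₁₂ : ℤ) - 1) * n₂ - n₁ →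
      g₁ - g₂ = (r₁₂ : ℤ) * r₂₃ * r₃₁ - (r₁₃ : ℤ) * r₂₁ * r₃₂) :=
  stmt11_general n₁ n₂ n₃ h1 h12 h23 hgcd S hS c₁ c₂ c₃ hc₁ hc₂ hc₃ r₁₂ r₁₃ r₂₁ r₂₃ r₃₁ r₃₂ hr₁ hr₂
    hr₃ g₁ g₂ hT
end

section
/- Let S = ⟨n_1,n_2,n_3⟩ be a numerical semigroup minimally generated by n_1 < n_2 < n_3 with gcd(n_1,n_2,n_3)=1 which is not symmetric, with c_i and r_{i,j} as in the standard setup, and let T(S) = {g_1, g_2} with g_1 = g(S). (i) If g_1 = (c_2−1)n_2 + (r_{1,3}−1)n_3 − n_1, then r_{1,3}n_3 − r_{3,1}n_1 = r_{2,1}n_1 − r_{1,2}n_2 = r_{3,2}n_2 − r_{2,3}n_3 = g_1 − g_2. (ii) If g_1 = (c_3−1)n_3 + (r_{1,2}−1)n_2 − n_1, then r_{3,1}n_1 − r_{1,3}n_3 = r_{1,2}n_2 − r_{2,1}n_1 = r_{2,3}n_3 − r_{3,2}n_2 = g_1 − g_2. -/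
/-!
Each generator `a` of `S = ⟨a, b, c⟩` has a critical relation `c_a a = r_{ab} b + r_{ac} c`.
Minimality of `c_a` forces `r_{ab} < c_b`, and comparing the sum of the three relations with the
resulting bounds `c_b ≤ r_{ab} + r_{cb}` gives Herzog's identities `c_b = r_{ab} + r_{cb}`.
The number `(c_b - 1) b + (r_{ac} - 1) c - a` is not in `S`, since any representation of it would
exhibit a smaller positive multiple of one generator in the semigroup of the other two, yet it lands
in `S` after adding any generator; so it is pseudo-Frobenius, and so is its image under `b ↔ c`.
The two candidates differ, hence they are `g₁` and `g₂`, and the claimed identities are linear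
consequences of the relations. Part (ii) is part (i) with `n₂` and `n₃` exchanged.
-/

-- `m, r, s` are the paper's `c_a, r_{a,b}, r_{a,c}`; working in `ℤ` avoids truncated subtraction.
structure IsCriticalRelation (a b c m r s : ℤ) : Prop where
  left_pos : 0 < r
  right_pos : 0 < s
  eq : m * a = r * b + s * c
  le : ∀ k u v : ℤ, 0 < k → 0 ≤ u → 0 ≤ v → k * a = u * b + v * c → m ≤ k

section

variable {a b c ca cb cc rab rac rba rbc rca rcb : ℤ}

namespace IsCriticalRelation

theorem swap (h : IsCriticalRelation a b c ca rab rac) : IsCriticalRelation a c b ca rac rab where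
  left_pos := h.right_pos
  right_pos := h.left_pos
  eq := by rw [h.eq, add_comm]
  le k u v hk hu hv e := h.le k v u hk hv hu (by rw [e, add_comm])

theorem mul_ne (h : IsCriticalRelation a b c ca rab rac) (ha : 0 < a) {k u v : ℤ} (hk : k < ca)
    (hu : 0 ≤ u) (hv : 0 ≤ v) (hpos : 0 < u * b + v * c) : k * a ≠ u * b + v * c := by
  intro e
  exact hk.not_ge (h.le k u v (pos_of_mul_pos_left (e ▸ hpos) ha.le) hu hv e)

theorem left_lt (hA : IsCriticalRelation a b c ca rab rac)
    (hB : IsCriticalRelation b a c cb rba rbc)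
    (ha : 0 < a) (hb : 0 < b) (hc : 0 < c) : rab < cb := by
  by_contra! h
  refine hA.mul_ne ha (k := ca - rba) (u := rab - cb) (v := rbc + rac)
    (by linarith [hB.left_pos]) (by linarith)
    (by linarith [hA.right_pos, hB.right_pos]) (by nlinarith [hA.right_pos, hB.right_pos]) ?_
  linear_combination hA.eq + hB.eq

theorem le_add (hB : IsCriticalRelation b a c cb rba rbc) (hA : IsCriticalRelation a b c ca rab rac)
    (hC : IsCriticalRelation c a b cc rca rcb) (ha : 0 < a) (hb : 0 < b) (hc : 0 < c) :
    cb ≤ rab + rcb := by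
  have hca := hC.left_lt hA.swap hc ha hb
  have hac := hA.swap.left_lt hC ha hc hb
  refine hB.le _ (ca - rca) (cc - rac) (by linarith [hA.left_pos, hC.right_pos]) (by linarith)
    (by linarith) ?_
  linear_combination -hA.eq - hC.eq

theorem eq_add (hB : IsCriticalRelation b a c cb rba rbc) (hA : IsCriticalRelation a b c ca rab rac)
    (hC : IsCriticalRelation c a b cc rca rcb) (ha : 0 < a) (hb : 0 < b) (hc : 0 < c) :
    cb = rab + rcb := by
  refine le_antisymm (hB.le_add hA hC ha hb hc) ?_
  have h₁ := hA.le_add hB hC.swap hb ha hc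
  have h₃ := hC.le_add hA.swap hB ha hc hb
  nlinarith [hA.eq, hB.eq, hC.eq, mul_le_mul_of_nonneg_right h₁ ha.le,
    mul_le_mul_of_nonneg_right h₃ hc.le]

end IsCriticalRelation

theorem candidate_ne_combination (hA : IsCriticalRelation a b c ca rab rac)
    (hB : IsCriticalRelation b a c cb rba rbc) (hC : IsCriticalRelation c a b cc rca rcb)
    (ha : 0 < a) (hb : 0 < b) (hc : 0 < c) {p q r : ℤ} (hp : 0 ≤ p) (hq : 0 ≤ q)
    (hr : 0 ≤ r) :
    (cb - 1) * b + (rac - 1) * c - a ≠ p * a + q * b + r * c := by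
  intro e
  rcases le_or_gt rac r with hr' | hr'
  · exact hB.mul_ne hb (k := cb - 1 - q) (u := p + 1) (v := r - rac + 1) (by linarith)
      (by linarith) (by linarith) (by nlinarith) (by linear_combination e)
  rcases le_or_gt cb q with hq' | hq'
  · have hac := hA.swap.left_lt hC ha hc hb
    exact hC.mul_ne hc (k := rac - 1 - r) (u := p + 1) (v := q - cb + 1) (by linarith)
      (by linarith) (by linarith) (by nlinarith) (by linear_combination e)
  -- now `(p + 1) a ∈ ⟨b, c⟩`, so `c_a ≤ p + 1` and the relation of `a` can be subtracted
  have hp' : ca ≤ p + 1 := hA.le (p + 1) (cb - 1 - q) (rac - 1 - r) (by linarith) (by linarith)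
    (by linarith) (by linear_combination -e)
  exact hB.mul_ne hb (k := cb - 1 - q - rab) (u := p + 1 - ca) (v := r + 1)
    (by linarith [hA.left_pos]) (by linarith) (by linarith) (by nlinarith)
    (by linear_combination e + hA.eq)

end

theorem AddSubmonoid.mem_closure_triple {a b c n : ℕ} :
    n ∈ AddSubmonoid.closure ({a, b, c} : Set ℕ) ↔
      ∃ p q r : ℕ, p * a + q * b + r * c = n := by
  rw [← Set.singleton_union, AddSubmonoid.closure_union, AddSubmonoid.mem_sup]
  simp only [AddSubmonoid.mem_closure_singleton, AddSubmonoid.mem_closure_pair, smul_eq_mul]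
  constructor
  · rintro ⟨_, ⟨p, rfl⟩, _, ⟨q, r, rfl⟩, rfl⟩
    exact ⟨p, q, r, by ring⟩
  · rintro ⟨p, q, r, rfl⟩
    exact ⟨_, ⟨p, rfl⟩, _, ⟨q, r, rfl⟩, by ring⟩

theorem AddSubmonoid.zmem_closure_triple {a b c : ℕ} {x : ℤ} :
    (AddSubmonoid.closure ({a, b, c} : Set ℕ)).zmem x ↔
      ∃ p q r : ℤ, 0 ≤ p ∧ 0 ≤ q ∧ 0 ≤ r ∧ p * a + q * b + r * c = x := by
  constructor
  · rintro ⟨n, hn, rfl⟩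
    obtain ⟨p, q, r, rfl⟩ := mem_closure_triple.1 hn
    exact ⟨p, q, r, by positivity, by positivity, by positivity, by push_cast; ring⟩
  · rintro ⟨p, q, r, hp, hq, hr, rfl⟩
    lift p to ℕ using hp
    lift q to ℕ using hq
    lift r to ℕ using hr
    exact ⟨_, mem_closure_triple.2 ⟨p, q, r, rfl⟩, by push_cast; ring⟩

theorem mem_pseudoFrobeniusSet_of_forall_add (s : Set ℕ) {x : ℤ}
    (hx : ¬ (AddSubmonoid.closure s).zmem x)
    (h : ∀ g ∈ s, (AddSubmonoid.closure s).zmem (x + g)) :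
    x ∈ pseudoFrobeniusSet (AddSubmonoid.closure s) := by
  refine ⟨hx, fun t ht => ?_⟩
  induction ht using AddSubmonoid.closure_induction with
  | mem g hg => exact fun _ => h g hg
  | zero => exact fun h0 => (h0 rfl).elim
  | add t u _ hu iht ihu =>
    rcases eq_or_ne t 0 with rfl | ht0
    · simpa using ihu
    obtain ⟨n, hn, e⟩ := iht ht0
    exact fun _ => ⟨n + u, add_mem hn hu, by push_cast; rw [e, add_assoc]⟩

theorem isCriticalRelation_of_closure {a b c m r s : ℕ}
    (hmin : ∀ k : ℕ, 0 < k → k * a ∈ AddSubmonoid.closure ({b, c} : Set ℕ) → m ≤ k)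
    (h : 0 < r ∧ 0 < s ∧ m * a = r * b + s * c) :
    IsCriticalRelation a b c m r s where
  left_pos := by exact_mod_cast h.1
  right_pos := by exact_mod_cast h.2.1
  eq := by exact_mod_cast h.2.2
  le k u v hk hu hv e := by
    lift k to ℕ using hk.le
    lift u to ℕ using hu
    lift v to ℕ using hv
    have hk_mem : k * a ∈ AddSubmonoid.closure ({b, c} : Set ℕ) :=
      (AddSubmonoid.mem_closure_pair _ _ _).2
        ⟨u, v, by simp only [smul_eq_mul]; exact_mod_cast e.symm⟩
    exact_mod_cast hmin k (by exact_mod_cast hk) hk_mem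

section

variable {a b c : ℕ} {ca cb cc rab rac rba rbc rca rcb : ℤ}

theorem candidate_mem_pseudoFrobeniusSet (ha : 0 < (a : ℤ)) (hb : 0 < (b : ℤ))
    (hc : 0 < (c : ℤ))
    (hA : IsCriticalRelation a b c ca rab rac) (hB : IsCriticalRelation b a c cb rba rbc)
    (hC : IsCriticalRelation c a b cc rca rcb) :
    (cb - 1) * b + (rac - 1) * c - a ∈ pseudoFrobeniusSet (AddSubmonoid.closure {a, b, c}) := by
  have hab := hA.left_lt hB ha hb hc
  have hba := hB.left_lt hA hb ha hc
  apply mem_pseudoFrobeniusSet_of_forall_add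
  · rw [AddSubmonoid.zmem_closure_triple]
    rintro ⟨p, q, r, hp, hq, hr, e⟩
    exact candidate_ne_combination hA hB hC ha hb hc hp hq hr e.symm
  · simp only [Set.mem_insert_iff, Set.mem_singleton_iff, forall_eq_or_imp, forall_eq,
      AddSubmonoid.zmem_closure_triple]
    refine ⟨⟨0, cb - 1, rac - 1, le_rfl, by linarith [hA.left_pos], by linarith [hA.right_pos],
        by ring⟩,
      ⟨rba - 1, 0, rbc + rac - 1, by linarith [hB.left_pos], le_rfl,
        by linarith [hA.right_pos, hB.right_pos], by linear_combination -hB.eq⟩,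
      ⟨ca - 1, cb - 1 - rab, 0, by linarith [hB.left_pos], by linarith [hA.left_pos], le_rfl,
        by linear_combination hA.eq⟩⟩

theorem sub_eq_of_pseudoFrobeniusSet_eq_pair (ha : 0 < (a : ℤ)) (hb : 0 < (b : ℤ))
    (hc : 0 < (c : ℤ)) (hA : IsCriticalRelation a b c ca rab rac)
    (hB : IsCriticalRelation b a c cb rba rbc) (hC : IsCriticalRelation c a b cc rca rcb)
    {g₁ g₂ : ℤ} (hT : pseudoFrobeniusSet (AddSubmonoid.closure {a, b, c}) = {g₁, g₂})
    (hg : g₁ = (cb - 1) * b + (rac - 1) * c - a) :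
    rac * c - rca * a = g₁ - g₂ ∧ rba * a - rab * b = g₁ - g₂ ∧
      rcb * b - rbc * c = g₁ - g₂ := by
  have hcb := hB.eq_add hA hC ha hb hc
  have hcc := hC.eq_add hA.swap hB ha hc hb
  have hf : (cc - 1) * c + (rab - 1) * b - a ∈ ({g₁, g₂} : Set ℤ) := by
    rw [← hT, Set.pair_comm]
    exact candidate_mem_pseudoFrobeniusSet ha hc hb hA.swap hC hB
  rcases hf with h | h
  · -- the two candidates coincide, which forces `r_{ca} a = r_{ac} c`
    exfalso
    have hca := hC.left_lt hA.swap hc ha hb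
    refine hA.mul_ne ha (k := rca) (u := 0) (v := rac) hca le_rfl hA.right_pos.le
      (by simpa using mul_pos hA.right_pos hc) ?_
    linear_combination -hC.eq + h + hg + b * hcb
  · rw [Set.mem_singleton_iff] at h
    subst hg h
    exact ⟨by linear_combination hC.eq - b * hcb, by linear_combination -hB.eq + c * hcc,
      by linear_combination c * hcc - b * hcb⟩

end

theorem stmt12_general
    (n₁ n₂ n₃ : ℕ)
    (h1 : 0 < n₁)
    (S : AddSubmonoid ℕ) (hS : S = AddSubmonoid.closure {n₁, n₂, n₃})
    (c₁ c₂ c₃ : ℕ)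
    (hc₁ : 0 < c₁ ∧ c₁ * n₁ ∈ AddSubmonoid.closure {n₂, n₃} ∧
      ∀ c : ℕ, 0 < c → c * n₁ ∈ AddSubmonoid.closure {n₂, n₃} → c₁ ≤ c)
    (hc₂ : 0 < c₂ ∧ c₂ * n₂ ∈ AddSubmonoid.closure {n₁, n₃} ∧
      ∀ c : ℕ, 0 < c → c * n₂ ∈ AddSubmonoid.closure {n₁, n₃} → c₂ ≤ c)
    (hc₃ : 0 < c₃ ∧ c₃ * n₃ ∈ AddSubmonoid.closure {n₁, n₂} ∧
      ∀ c : ℕ, 0 < c → c * n₃ ∈ AddSubmonoid.closure {n₁, n₂} → c₃ ≤ c)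
    (r₁₂ r₁₃ r₂₁ r₂₃ r₃₁ r₃₂ : ℕ)
    (hr₁ : 0 < r₁₂ ∧ 0 < r₁₃ ∧ c₁ * n₁ = r₁₂ * n₂ + r₁₃ * n₃)
    (hr₂ : 0 < r₂₁ ∧ 0 < r₂₃ ∧ c₂ * n₂ = r₂₁ * n₁ + r₂₃ * n₃)
    (hr₃ : 0 < r₃₁ ∧ 0 < r₃₂ ∧ c₃ * n₃ = r₃₁ * n₁ + r₃₂ * n₂)
    (g₁ g₂ : ℤ) (hT : pseudoFrobeniusSet S = {g₁, g₂}) :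
    (g₁ = ((c₂ : ℤ) - 1) * n₂ + ((r₁₃ : ℤ) - 1) * n₃ - n₁ →
      (r₁₃ : ℤ) * n₃ - (r₃₁ : ℤ) * n₁ = g₁ - g₂ ∧
      (r₂₁ : ℤ) * n₁ - (r₁₂ : ℤ) * n₂ = g₁ - g₂ ∧
      (r₃₂ : ℤ) * n₂ - (r₂₃ : ℤ) * n₃ = g₁ - g₂) ∧
    (g₁ = ((c₃ : ℤ) - 1) * n₃ + ((r₁₂ : ℤ) - 1) * n₂ - n₁ →
      (r₃₁ : ℤ) * n₁ - (r₁₃ : ℤ) * n₃ = g₁ - g₂ ∧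
      (r₁₂ : ℤ) * n₂ - (r₂₁ : ℤ) * n₁ = g₁ - g₂ ∧
      (r₂₃ : ℤ) * n₃ - (r₃₂ : ℤ) * n₂ = g₁ - g₂) := by
  subst hS
  have hA := isCriticalRelation_of_closure hc₁.2.2 hr₁
  have hB := isCriticalRelation_of_closure hc₂.2.2 hr₂
  have hC := isCriticalRelation_of_closure hc₃.2.2 hr₃
  have h₁ : 0 < (n₁ : ℤ) := by exact_mod_cast h1
  have h₂ : 0 < (n₂ : ℤ) := by nlinarith [hB.eq, hB.left_pos, hB.right_pos]
  have h₃ : 0 < (n₃ : ℤ) := by nlinarith [hC.eq, hC.left_pos, hC.right_pos]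
  refine ⟨sub_eq_of_pseudoFrobeniusSet_eq_pair h₁ h₂ h₃ hA hB hC hT, fun hg => ?_⟩
  rw [Set.pair_comm (n₂ : ℕ)] at hT
  obtain ⟨e₁, e₂, e₃⟩ :=
    sub_eq_of_pseudoFrobeniusSet_eq_pair h₁ h₃ h₂ hA.swap hC hB hT hg
  exact ⟨e₂, e₁, e₃⟩

/-- with `T(S) = {g₁, g₂}`, `g₁ = g(S)`:
(i) if `g₁ = (c₂−1)n₂ + (r₁₃−1)n₃ − n₁` then
`r₁₃n₃ − r₃₁n₁ = r₂₁n₁ − r₁₂n₂ = r₃₂n₂ − r₂₃n₃ = g₁ − g₂`;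
(ii) if `g₁ = (c₃−1)n₃ + (r₁₂−1)n₂ − n₁` then
`r₃₁n₁ − r₁₃n₃ = r₁₂n₂ − r₂₁n₁ = r₂₃n₃ − r₃₂n₂ = g₁ − g₂`. -/
theorem stmt12
    (n₁ n₂ n₃ : ℕ)
    (h1 : 0 < n₁) (h12 : n₁ < n₂) (h23 : n₂ < n₃)
    (hgcd : Nat.gcd n₁ (Nat.gcd n₂ n₃) = 1)
    (hmin1 : n₁ ∉ AddSubmonoid.closure {n₂, n₃})
    (hmin2 : n₂ ∉ AddSubmonoid.closure {n₁, n₃})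
    (hmin3 : n₃ ∉ AddSubmonoid.closure {n₁, n₂})
    (S : AddSubmonoid ℕ) (hS : S = AddSubmonoid.closure {n₁, n₂, n₃})
    (hnotsym : ¬ ∀ x : ℤ, ¬ S.zmem x ↔ S.zmem (frobeniusNumber S - x))
    (c₁ c₂ c₃ : ℕ)
    (hc₁ : 0 < c₁ ∧ c₁ * n₁ ∈ AddSubmonoid.closure {n₂, n₃} ∧
      ∀ c : ℕ, 0 < c → c * n₁ ∈ AddSubmonoid.closure {n₂, n₃} → c₁ ≤ c)
    (hc₂ : 0 < c₂ ∧ c₂ * n₂ ∈ AddSubmonoid.closure {n₁, n₃} ∧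
      ∀ c : ℕ, 0 < c → c * n₂ ∈ AddSubmonoid.closure {n₁, n₃} → c₂ ≤ c)
    (hc₃ : 0 < c₃ ∧ c₃ * n₃ ∈ AddSubmonoid.closure {n₁, n₂} ∧
      ∀ c : ℕ, 0 < c → c * n₃ ∈ AddSubmonoid.closure {n₁, n₂} → c₃ ≤ c)
    (r₁₂ r₁₃ r₂₁ r₂₃ r₃₁ r₃₂ : ℕ)
    (hr₁ : 0 < r₁₂ ∧ 0 < r₁₃ ∧ c₁ * n₁ = r₁₂ * n₂ + r₁₃ * n₃)
    (hr₂ : 0 < r₂₁ ∧ 0 < r₂₃ ∧ c₂ * n₂ = r₂₁ * n₁ + r₂₃ * n₃)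
    (hr₃ : 0 < r₃₁ ∧ 0 < r₃₂ ∧ c₃ * n₃ = r₃₁ * n₁ + r₃₂ * n₂)
    (g₁ g₂ : ℤ) (hT : pseudoFrobeniusSet S = {g₁, g₂})
    (hg₁ : g₁ = frobeniusNumber S) :
    (g₁ = ((c₂ : ℤ) - 1) * n₂ + ((r₁₃ : ℤ) - 1) * n₃ - n₁ →
      (r₁₃ : ℤ) * n₃ - (r₃₁ : ℤ) * n₁ = g₁ - g₂ ∧
      (r₂₁ : ℤ) * n₁ - (r₁₂ : ℤ) * n₂ = g₁ - g₂ ∧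
      (r₃₂ : ℤ) * n₂ - (r₂₃ : ℤ) * n₃ = g₁ - g₂) ∧
    (g₁ = ((c₃ : ℤ) - 1) * n₃ + ((r₁₂ : ℤ) - 1) * n₂ - n₁ →
      (r₃₁ : ℤ) * n₁ - (r₁₃ : ℤ) * n₃ = g₁ - g₂ ∧
      (r₁₂ : ℤ) * n₂ - (r₂₁ : ℤ) * n₁ = g₁ - g₂ ∧
      (r₂₃ : ℤ) * n₃ - (r₃₂ : ℤ) * n₂ = g₁ - g₂) :=
  stmt12_general n₁ n₂ n₃ h1 S hS c₁ c₂ c₃ hc₁ hc₂ hc₃ r₁₂ r₁₃ r₂₁ r₂₃ r₃₁ r₃₂ hr₁ hr₂ hr₃ g₁ g₂ hT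
end

section
/- Let m be a positive integer and let S be a numerical semigroup with multiplicity m. Then S is m-irreducible if and only if one of the following holds: (1) S = {0} ∪ {x ∈ ℕ : x ≥ m}; (2) S = {0} ∪ {x ∈ ℕ : x ≥ m and x ≠ F(S)}, where F(S) is the Frobenius number of S (and F(S) > m); (3) S is an irreducible numerical semigroup. -/
/-- A numerical semigroup: an additive submonoid of `ℕ` with finite complement. -/
def IsNumericalSemigroup (S : AddSubmonoid ℕ) : Prop := ((S : Set ℕ)ᶜ).Finite

/-- The multiplicity of a numerical semigroup: its least positive element. -/
noncomputable def multiplicityNS (S : AddSubmonoid ℕ) : ℕ := sInf {x : ℕ | x ∈ S ∧ x ≠ 0}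

/-- A numerical semigroup is irreducible if it is not the intersection of two
numerical semigroups properly containing it. -/
def IsIrreducibleNS (S : AddSubmonoid ℕ) : Prop :=
  ¬ ∃ T₁ T₂ : AddSubmonoid ℕ, IsNumericalSemigroup T₁ ∧ IsNumericalSemigroup T₂ ∧
    S = T₁ ⊓ T₂ ∧ S < T₁ ∧ S < T₂

/-- A numerical semigroup of multiplicity `m` is `m`-irreducible if it is not the
intersection of two numerical semigroups of multiplicity `m` properly containing it. -/
def IsMIrreducibleNS (m : ℕ) (S : AddSubmonoid ℕ) : Prop :=
  ¬ ∃ T₁ T₂ : AddSubmonoid ℕ, IsNumericalSemigroup T₁ ∧ IsNumericalSemigroup T₂ ∧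
    multiplicityNS T₁ = m ∧ multiplicityNS T₂ = m ∧
    S = T₁ ⊓ T₂ ∧ S < T₁ ∧ S < T₂

/-- A special gap of `S`. -/
def SpecialGap (S : AddSubmonoid ℕ) (g : ℕ) : Prop :=
  g ∉ S ∧ (∀ s ∈ S, s ≠ 0 → g + s ∈ S) ∧ g + g ∈ S

/-- The unitary extension `S ∪ {g}` for a special gap `g`. -/
def unitaryExt (S : AddSubmonoid ℕ) (g : ℕ) (hg : SpecialGap S g) : AddSubmonoid ℕ where
  carrier := (S : Set ℕ) ∪ {g}
  zero_mem' := Or.inl S.zero_mem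
  add_mem' := by
    rintro a b (ha | ha) (hb | hb)
    · exact Or.inl (S.add_mem ha hb)
    · simp only [Set.mem_singleton_iff] at hb; subst hb
      rcases eq_or_ne a 0 with h | h
      · subst h; simp
      · exact Or.inl (by rw [add_comm]; exact hg.2.1 a ha h)
    · simp only [Set.mem_singleton_iff] at ha; subst ha
      rcases eq_or_ne b 0 with h | h
      · subst h; simp
      · exact Or.inl (hg.2.1 b hb h)
    · simp only [Set.mem_singleton_iff] at ha hb; subst ha; subst hb
      exact Or.inl hg.2.2

lemma mem_unitaryExt (S : AddSubmonoid ℕ) (g : ℕ) (hg : SpecialGap S g) (x : ℕ) :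
    x ∈ unitaryExt S g hg ↔ x ∈ S ∨ x = g := Iff.rfl

/-- From two distinct special gaps `≥ m` one gets an m-decomposition. -/
lemma not_mIrred_of_two (m : ℕ) (S : AddSubmonoid ℕ) (hns : IsNumericalSemigroup S)
    (hm_mem : m ∈ S) (hm0 : m ≠ 0) (hm_min : ∀ x ∈ S, x ≠ 0 → m ≤ x)
    {g₁ g₂ : ℕ} (h1 : SpecialGap S g₁) (h2 : SpecialGap S g₂) (hne : g₁ ≠ g₂)
    (hg1 : m ≤ g₁) (hg2 : m ≤ g₂) : ¬ IsMIrreducibleNS m S := by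
  intro hmi
  apply hmi
  refine ⟨unitaryExt S g₁ h1, unitaryExt S g₂ h2, ?_, ?_, ?_, ?_, ?_, ?_, ?_⟩
  · exact hns.subset (by intro x hx hx'; exact hx (Or.inl hx'))
  · exact hns.subset (by intro x hx hx'; exact hx (Or.inl hx'))
  · refine le_antisymm (Nat.sInf_le ⟨Or.inl hm_mem, hm0⟩) ?_
    have hne' : {x : ℕ | x ∈ unitaryExt S g₁ h1 ∧ x ≠ 0}.Nonempty := ⟨m, Or.inl hm_mem, hm0⟩
    obtain ⟨hx, hx0⟩ := Nat.sInf_mem hne'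
    rw [mem_unitaryExt] at hx
    rcases hx with hx | hx
    · exact hm_min _ hx hx0
    · exact le_of_le_of_eq hg1 hx.symm
  · refine le_antisymm (Nat.sInf_le ⟨Or.inl hm_mem, hm0⟩) ?_
    have hne' : {x : ℕ | x ∈ unitaryExt S g₂ h2 ∧ x ≠ 0}.Nonempty := ⟨m, Or.inl hm_mem, hm0⟩
    obtain ⟨hx, hx0⟩ := Nat.sInf_mem hne'
    rw [mem_unitaryExt] at hx
    rcases hx with hx | hx
    · exact hm_min _ hx hx0
    · exact le_of_le_of_eq hg2 hx.symm
  · ext x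
    simp only [AddSubmonoid.mem_inf, mem_unitaryExt]
    constructor
    · intro hx; exact ⟨Or.inl hx, Or.inl hx⟩
    · rintro ⟨h | h, h' | h'⟩ <;> first | assumption | (subst h; try subst h'; first | assumption | (exact absurd rfl hne))
  · refine lt_of_le_of_ne (fun x hx => Or.inl hx) (fun h => ?_)
    have : g₁ ∈ S := by rw [h]; exact Or.inr rfl
    exact h1.1 this
  · refine lt_of_le_of_ne (fun x hx => Or.inl hx) (fun h => ?_)
    have : g₂ ∈ S := by rw [h]; exact Or.inr rfl
    exact h2.1 this

/-- From a decomposition, each component contains a special gap of `S`. -/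
lemma specialGap_of_component (S T : AddSubmonoid ℕ) (hns : IsNumericalSemigroup S)
    (hle : S ≤ T) (hlt : S < T) :
    ∃ g : ℕ, SpecialGap S g ∧ g ∈ T ∧ ∀ x ∈ T, x ∉ S → x ≤ g := by
  classical
  set D : Set ℕ := {x | x ∈ T ∧ x ∉ S} with hD
  have hDfin : D.Finite := hns.subset (fun x hx => hx.2)
  have hDne : D.Nonempty := by
    obtain ⟨x, hxT, hxS⟩ := SetLike.exists_of_lt hlt
    exact ⟨x, hxT, hxS⟩
  have hbdd : BddAbove D := hDfin.bddAbove
  set g := sSup D with hg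
  have hgD : g ∈ D := Nat.sSup_mem hDne hbdd
  have hub : ∀ x ∈ D, x ≤ g := fun x hx => le_csSup hbdd hx
  have hg0 : g ≠ 0 := fun h => hgD.2 (h ▸ S.zero_mem)
  refine ⟨g, ⟨hgD.2, ?_, ?_⟩, hgD.1, fun x hx hx' => hub x ⟨hx, hx'⟩⟩
  · intro s hs hs0
    by_contra hgs
    have : g + s ∈ D := ⟨T.add_mem hgD.1 (hle hs), hgs⟩
    have := hub _ this
    omega
  · by_contra hgg
    have : g + g ∈ D := ⟨T.add_mem hgD.1 hgD.1, hgg⟩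
    have := hub _ this
    omega

/-- a numerical semigroup `S` of multiplicity `m` is
`m`-irreducible iff `S = {0} ∪ {x ≥ m}`, or
`S = {0} ∪ {x ≥ m, x ≠ F(S)}` with `F(S) > m`, or `S` is irreducible. -/
theorem stmt18 (m : ℕ) (hm : 0 < m) (S : AddSubmonoid ℕ)
    (hns : IsNumericalSemigroup S) (hmult : multiplicityNS S = m) :
    IsMIrreducibleNS m S ↔
      ((S : Set ℕ) = {0} ∪ {x : ℕ | m ≤ x} ∨
       ((S : Set ℕ) = {0} ∪ {x : ℕ | m ≤ x ∧ (x : ℤ) ≠ frobeniusNumber S} ∧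
          (m : ℤ) < frobeniusNumber S) ∨
       IsIrreducibleNS S) := by
  classical
  have hSne : {x : ℕ | x ∈ S ∧ x ≠ 0}.Nonempty := by
    by_contra h
    rw [Set.not_nonempty_iff_eq_empty] at h
    rw [multiplicityNS, h, Nat.sInf_empty] at hmult
    omega
  have hm_mem : m ∈ S := by
    have := Nat.sInf_mem hSne
    rw [show sInf {x : ℕ | x ∈ S ∧ x ≠ 0} = m from hmult] at this
    exact this.1
  have hm_min : ∀ x ∈ S, x ≠ 0 → m ≤ x := by
    intro x hx hx0
    have : multiplicityNS S ≤ x := Nat.sInf_le ⟨hx, hx0⟩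
    omega
  by_cases hcompl : ((S : Set ℕ)ᶜ).Nonempty
  · -- main case : S has a nonempty complement
    set Fn : ℕ := sSup ((S : Set ℕ)ᶜ) with hFn
    have hFmem : Fn ∈ ((S : Set ℕ)ᶜ) := Nat.sSup_mem hcompl hns.bddAbove
    have hFmem' : Fn ∉ S := hFmem
    have hFub : ∀ x : ℕ, x ∉ S → x ≤ Fn := fun x hx => le_csSup hns.bddAbove hx
    have hF0 : Fn ≠ 0 := fun h => hFmem' (h ▸ S.zero_mem)
    have hub : ∀ x ∈ {x : ℤ | ¬ S.zmem x}, x ≤ (Fn : ℤ) := by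
      intro x hx
      by_cases hx0 : 0 ≤ x
      · have hxS : x.toNat ∉ S := fun h => hx ⟨x.toNat, h, Int.toNat_of_nonneg hx0⟩
        have := hFub _ hxS
        omega
      · omega
    have hne : ((Fn : ℤ)) ∈ {x : ℤ | ¬ S.zmem x} := by
      rintro ⟨n, hn, hcast⟩
      have : n = Fn := by exact_mod_cast hcast
      exact hFmem' (this ▸ hn)
    have hfrob : frobeniusNumber S = (Fn : ℤ) := by
      refine le_antisymm (csSup_le ⟨(Fn : ℤ), hne⟩ hub) (le_csSup ⟨(Fn : ℤ), hub⟩ hne)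
    rw [hfrob]
    have hsetF : {x : ℕ | m ≤ x ∧ (x : ℤ) ≠ (Fn : ℤ)} = {x : ℕ | m ≤ x ∧ x ≠ Fn} := by
      ext x; simp [Nat.cast_inj]
    rw [hsetF]
    have hcastlt : ((m : ℤ) < (Fn : ℤ)) ↔ m < Fn := by exact_mod_cast Iff.rfl
    rw [hcastlt]
    constructor
    · -- forward direction
      intro hmi
      by_cases h1 : (S : Set ℕ) = {0} ∪ {x : ℕ | m ≤ x}
      · exact Or.inl h1
      by_cases h3 : IsIrreducibleNS S
      · exact Or.inr (Or.inr h3)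
      refine Or.inr (Or.inl ?_)
      rw [IsIrreducibleNS, not_not] at h3
      obtain ⟨T₁, T₂, hn1, hn2, heq, hlt1, hlt2⟩ := h3
      have hle1 : S ≤ T₁ := le_trans (le_of_eq heq) inf_le_left
      have hle2 : S ≤ T₂ := le_trans (le_of_eq heq) inf_le_right
      obtain ⟨g₁, hsg1, hgT1, _⟩ := specialGap_of_component S T₁ hns hle1 hlt1
      obtain ⟨g₂, hsg2, hgT2, _⟩ := specialGap_of_component S T₂ hns hle2 hlt2
      have hne12 : g₁ ≠ g₂ := by
        intro h
        subst h
        have : g₁ ∈ S := by rw [heq]; exact AddSubmonoid.mem_inf.mpr ⟨hgT1, hgT2⟩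
        exact hsg1.1 this
      have hsmall : ∃ h', SpecialGap S h' ∧ h' < m := by
        by_contra hc
        push_neg at hc
        exact not_mIrred_of_two m S hns hm_mem (by omega) hm_min hsg1 hsg2 hne12
          (hc g₁ hsg1) (hc g₂ hsg2) hmi
      obtain ⟨h', hh'sp, hh'm⟩ := hsmall
      have hh'0 : h' ≠ 0 := fun h => hh'sp.1 (h ▸ S.zero_mem)
      have hex : ∃ y, y ∉ S ∧ m ≤ y := by
        by_contra hc
        push_neg at hc
        apply h1
        ext x
        simp only [Set.mem_union, Set.mem_singleton_iff, Set.mem_setOf_eq, SetLike.mem_coe]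
        constructor
        · intro hx
          rcases eq_or_ne x 0 with h | h
          · exact Or.inl h
          · exact Or.inr (hm_min x hx h)
        · rintro (h | h)
          · exact h ▸ S.zero_mem
          · by_contra hxS
            have := hc x hxS
            omega
      obtain ⟨y₀, hy₀S, hy₀m⟩ := hex
      have hy₀m' : m < y₀ := lt_of_le_of_ne hy₀m (fun h => hy₀S (h ▸ hm_mem))
      have hmF : m < Fn := lt_of_lt_of_le hy₀m' (hFub _ hy₀S)
      refine ⟨?_, hmF⟩
      have hY : ∀ y, y ∉ S → m ≤ y → y = Fn := by
        by_contra hc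
        push_neg at hc
        obtain ⟨y1, hy1S, hy1m, hy1F⟩ := hc
        set Y : Set ℕ := {y | y ∉ S ∧ m ≤ y ∧ y ≠ Fn} with hYdef
        have hYfin : Y.Finite := hns.subset (fun x hx => hx.1)
        have hYne : Y.Nonempty := ⟨y1, hy1S, hy1m, hy1F⟩
        set y : ℕ := sSup Y with hydef
        have hyY : y ∈ Y := Nat.sSup_mem hYne hYfin.bddAbove
        have hyub : ∀ z, z ∉ S → m ≤ z → z ≠ Fn → z ≤ y :=
          fun z h1' h2' h3' => le_csSup hYfin.bddAbove (⟨h1', h2', h3'⟩ : z ∈ Y)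
        obtain ⟨hyS, hym, hyF⟩ := hyY
        have hyFn : y < Fn := lt_of_le_of_ne (hFub _ hyS) hyF
        have hym' : m < y := lt_of_le_of_ne hym (fun h => hyS (h ▸ hm_mem))
        have hFh : Fn - h' ∉ S := by
          intro hmem
          have h0 : Fn - h' ≠ 0 := by omega
          have hmem2 := hh'sp.2.1 _ hmem h0
          have heq' : h' + (Fn - h') = Fn := by omega
          rw [heq'] at hmem2
          exact hFmem' hmem2
        have hysp : SpecialGap S y := by
          refine ⟨hyS, ?_, ?_⟩
          · intro s hs hs0
            by_contra hys
            have hsm : m ≤ s := hm_min s hs hs0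
            rcases eq_or_ne (y + s) Fn with hF | hF
            · have := hyub (Fn - h') hFh (by omega) (by omega)
              omega
            · have := hyub (y + s) hys (by omega) hF
              omega
          · by_contra hyy
            rcases eq_or_ne (y + y) Fn with hF | hF
            · have := hyub (Fn - h') hFh (by omega) (by omega)
              omega
            · have := hyub (y + y) hyy (by omega) hF
              omega
        have hFsp : SpecialGap S Fn := by
          refine ⟨hFmem', ?_, ?_⟩
          · intro s hs hs0
            by_contra hFs
            have := hFub _ hFs
            have := hm_min s hs hs0
            omega
          · by_contra hFF
            have := hFub _ hFF
            omega
        exact not_mIrred_of_two m S hns hm_mem (by omega) hm_min hysp hFsp (by omega)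
          (le_of_lt hym') (by omega) hmi
      ext x
      simp only [Set.mem_union, Set.mem_singleton_iff, Set.mem_setOf_eq, SetLike.mem_coe]
      constructor
      · intro hx
        rcases eq_or_ne x 0 with h | h
        · exact Or.inl h
        · exact Or.inr ⟨hm_min x hx h, fun hF => hFmem' (hF ▸ hx)⟩
      · rintro (h | ⟨hx1, hx2⟩)
        · exact h ▸ S.zero_mem
        · by_contra hxS
          exact hx2 (hY x hxS hx1)
    · -- backward direction
      rintro (h1 | ⟨h2, hmF⟩ | h3)
      · rintro ⟨T₁, T₂, hn1, hn2, hmu1, hmu2, heq, hlt1, hlt2⟩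
        obtain ⟨x, hxT, hxS⟩ := SetLike.exists_of_lt hlt1
        have hx0 : x ≠ 0 := fun h => hxS (h ▸ S.zero_mem)
        have hxm : m ≤ x := by
          have : multiplicityNS T₁ ≤ x := Nat.sInf_le ⟨hxT, hx0⟩
          omega
        exact hxS (by rw [← SetLike.mem_coe, h1]; exact Or.inr hxm)
      · rintro ⟨T₁, T₂, hn1, hn2, hmu1, hmu2, heq, hlt1, hlt2⟩
        have key : ∀ T : AddSubmonoid ℕ, multiplicityNS T = m → S < T → Fn ∈ T := by
          intro T hmu hlt
          obtain ⟨x, hxT, hxS⟩ := SetLike.exists_of_lt hlt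
          have hx0 : x ≠ 0 := fun h => hxS (h ▸ S.zero_mem)
          have hxm : m ≤ x := by
            have : multiplicityNS T ≤ x := Nat.sInf_le ⟨hxT, hx0⟩
            omega
          have hxF : x = Fn := by
            by_contra hne'
            exact hxS (by rw [← SetLike.mem_coe, h2]; exact Or.inr ⟨hxm, hne'⟩)
          exact hxF ▸ hxT
        have hFS : Fn ∈ S := by
          rw [heq]
          exact AddSubmonoid.mem_inf.mpr ⟨key T₁ hmu1 hlt1, key T₂ hmu2 hlt2⟩
        have hFS' : Fn ∈ ({0} ∪ {x : ℕ | m ≤ x ∧ x ≠ Fn} : Set ℕ) := by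
          rw [← h2]; exact hFS
        rcases hFS' with h | h
        · simp only [Set.mem_singleton_iff] at h; omega
        · exact h.2 rfl
      · rintro ⟨T₁, T₂, hn1, hn2, _, _, heq, hlt1, hlt2⟩
        exact h3 ⟨T₁, T₂, hn1, hn2, heq, hlt1, hlt2⟩
  · -- degenerate case : S = ℕ
    have hSuniv : ∀ x : ℕ, x ∈ S := by
      intro x
      by_contra h
      exact hcompl ⟨x, h⟩
    have hm1 : m = 1 := le_antisymm (hm_min 1 (hSuniv 1) one_ne_zero) hm
    constructor
    · intro _
      left
      ext x
      simp only [Set.mem_union, Set.mem_singleton_iff, Set.mem_setOf_eq, SetLike.mem_coe, hm1]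
      constructor
      · intro _; omega
      · intro _; exact hSuniv x
    · intro _
      rintro ⟨T₁, T₂, _, _, _, _, _, hlt1, _⟩
      obtain ⟨y, hyT, hyS⟩ := SetLike.exists_of_lt hlt1
      exact hyS (hSuniv y)
end

section
/- Let S be a numerical semigroup of multiplicity 4. Then S is 4-irreducible if and only if S = ⟨4,5,6,7⟩ or S = ⟨4,6,7,9⟩ or S is an irreducible numerical semigroup. -/
-- `SG(S)` in the literature; the last condition is the pseudo-Frobenius one.
def IsSpecialGap (S : AddSubmonoid ℕ) (h : ℕ) : Prop :=
  h ∉ S ∧ h + h ∈ S ∧ ∀ s ∈ S, s ≠ 0 → h + s ∈ S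

section SpecialGaps

variable {S T : AddSubmonoid ℕ} {h m : ℕ}

theorem IsNumericalSemigroup.exists_forall_ge_mem (hns : IsNumericalSemigroup S) :
    ∃ N, ∀ n, N ≤ n → n ∈ S := by
  obtain ⟨N, hN⟩ := hns.bddAbove
  exact ⟨N + 1, fun n hn => by_contra fun hnS => by have := hN hnS; omega⟩

theorem mem_of_forall_lt_add_mem (hm : m ∈ S) (hm0 : m ≠ 0) {a : ℕ}
    (hblock : ∀ i < m, a + i ∈ S) :
    ∀ n, a ≤ n → n ∈ S := by
  intro n
  induction n using Nat.strong_induction_on with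
  | _ n ih =>
    intro han
    by_cases hn : n < a + m
    · simpa [Nat.add_sub_cancel' han] using hblock (n - a) (by omega)
    · simpa [Nat.sub_add_cancel (show m ≤ n by omega)] using
        S.add_mem (ih (n - m) (by omega) (by omega)) hm

theorem multiplicityNS_le {x : ℕ} (hx : x ∈ S) (hx0 : x ≠ 0) : multiplicityNS S ≤ x :=
  Nat.sInf_le ⟨hx, hx0⟩

theorem IsNumericalSemigroup.multiplicityNS_mem (hns : IsNumericalSemigroup S) :
    multiplicityNS S ∈ S ∧ multiplicityNS S ≠ 0 := by
  obtain ⟨N, hN⟩ := hns.exists_forall_ge_mem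
  exact Nat.sInf_mem (⟨N + 1, hN _ (by omega), by omega⟩ : {x | x ∈ S ∧ x ≠ 0}.Nonempty)

theorem multiplicityNS_eq (hm : m ∈ S) (hm0 : m ≠ 0) (hle : ∀ x ∈ S, x ≠ 0 → m ≤ x) :
    multiplicityNS S = m :=
  le_antisymm (multiplicityNS_le hm hm0) <|
    (Nat.sInf_mem (⟨m, hm, hm0⟩ : {x | x ∈ S ∧ x ≠ 0}.Nonempty)).elim (hle _)

theorem IsSpecialGap.add_mul_mem (hh : IsSpecialGap S h) {s : ℕ} (hs : s ∈ S) (hs0 : s ≠ 0)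
    (k : ℕ) : s + k * h ∈ S := by
  induction k with
  | zero => simpa using hs
  | succ k ih =>
    rw [Nat.succ_mul, ← add_assoc, add_comm]
    exact hh.2.2 _ ih (by omega)

theorem IsSpecialGap.ne_zero (hh : IsSpecialGap S h) : h ≠ 0 :=
  fun h0 => hh.1 (h0 ▸ S.zero_mem)

def adjoinSpecialGap (S : AddSubmonoid ℕ) (h : ℕ) (hh : IsSpecialGap S h) :
    AddSubmonoid ℕ where
  carrier := insert h S
  zero_mem' := Or.inr S.zero_mem
  add_mem' := by
    rintro a b (rfl | ha) (rfl | hb)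
    · exact Or.inr hh.2.1
    · rcases eq_or_ne b 0 with rfl | hb0
      · exact Or.inl rfl
      · exact Or.inr (hh.2.2 b hb hb0)
    · rcases eq_or_ne a 0 with rfl | ha0
      · exact Or.inl (zero_add _)
      · exact Or.inr (add_comm a _ ▸ hh.2.2 a ha ha0)
    · exact Or.inr (S.add_mem ha hb)

variable {hh : IsSpecialGap S h}

theorem mem_adjoinSpecialGap {x : ℕ} : x ∈ adjoinSpecialGap S h hh ↔ x = h ∨ x ∈ S :=
  Set.mem_insert_iff

theorem lt_adjoinSpecialGap : S < adjoinSpecialGap S h hh :=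
  SetLike.lt_iff_le_and_exists.mpr
    ⟨fun _ hx => mem_adjoinSpecialGap.mpr (Or.inr hx), h, mem_adjoinSpecialGap.mpr (Or.inl rfl),
      hh.1⟩

theorem IsNumericalSemigroup.adjoinSpecialGap (hns : IsNumericalSemigroup S) :
    IsNumericalSemigroup (adjoinSpecialGap S h hh) :=
  hns.subset fun _ hx hxS => hx (mem_adjoinSpecialGap.mpr (Or.inr hxS))

theorem multiplicityNS_adjoinSpecialGap (hns : IsNumericalSemigroup S)
    (hlt : multiplicityNS S < h) : multiplicityNS (adjoinSpecialGap S h hh) = multiplicityNS S := by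
  obtain ⟨hmS, hm0⟩ := hns.multiplicityNS_mem
  refine multiplicityNS_eq (mem_adjoinSpecialGap.mpr (Or.inr hmS)) hm0 fun x hx hx0 => ?_
  rcases mem_adjoinSpecialGap.mp hx with rfl | hxS
  · exact hlt.le
  · exact multiplicityNS_le hxS hx0

theorem adjoinSpecialGap_inf_adjoinSpecialGap {h' : ℕ} {hh' : IsSpecialGap S h'}
    (hne : h ≠ h') :
    adjoinSpecialGap S h hh ⊓ adjoinSpecialGap S h' hh' = S := by
  ext x
  simp only [AddSubmonoid.mem_inf, mem_adjoinSpecialGap]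
  constructor
  · rintro ⟨rfl | hx, rfl | hx'⟩
    exacts [absurd rfl hne, hx', hx, hx]
  · exact fun hx => ⟨Or.inr hx, Or.inr hx⟩

/-- The largest element of `T \ S` is a special gap of `S`. -/
theorem exists_isSpecialGap_mem_of_lt (hns : IsNumericalSemigroup S) (hST : S < T) :
    ∃ h ∈ T, IsSpecialGap S h := by
  obtain ⟨w, hwT, hwS⟩ := (SetLike.lt_iff_le_and_exists.mp hST).2
  obtain ⟨h, ⟨hhT, hhS⟩, hmax⟩ := Set.exists_max_image ((T : Set ℕ) \ S) id
    (hns.subset fun _ hx => hx.2) ⟨w, hwT, hwS⟩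
  have hh0 : h ≠ 0 := fun h0 => hhS (h0 ▸ S.zero_mem)
  refine ⟨h, hhT, hhS, by_contra fun hc => ?_, fun s hs hs0 => by_contra fun hc => ?_⟩
  · have : h + h ≤ h := hmax _ ⟨T.add_mem hhT hhT, hc⟩
    omega
  · have : h + s ≤ h := hmax _ ⟨T.add_mem hhT (hST.le hs), hc⟩
    omega

theorem exists_isSpecialGap_ne_of_eq_inf (hns : IsNumericalSemigroup S)
    {T₁ T₂ : AddSubmonoid ℕ} (heq : S = T₁ ⊓ T₂) (h₁ : S < T₁) (h₂ : S < T₂) :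
    ∃ a ∈ T₁, ∃ b ∈ T₂, a ≠ b ∧ IsSpecialGap S a ∧ IsSpecialGap S b := by
  obtain ⟨a, haT, ha⟩ := exists_isSpecialGap_mem_of_lt hns h₁
  obtain ⟨b, hbT, hb⟩ := exists_isSpecialGap_mem_of_lt hns h₂
  refine ⟨a, haT, b, hbT, fun hab => ha.1 ?_, ha, hb⟩
  rw [heq]
  exact AddSubmonoid.mem_inf.mpr ⟨haT, hab ▸ hbT⟩

theorem exists_isSpecialGap_ne_of_not_isIrreducibleNS (hns : IsNumericalSemigroup S)
    (hred : ¬ IsIrreducibleNS S) : ∃ a b, a ≠ b ∧ IsSpecialGap S a ∧ IsSpecialGap S b := by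
  obtain ⟨T₁, T₂, -, -, heq, h₁, h₂⟩ := not_not.mp hred
  obtain ⟨a, -, b, -, hab⟩ := exists_isSpecialGap_ne_of_eq_inf hns heq h₁ h₂
  exact ⟨a, b, hab⟩

theorem isMIrreducibleNS_iff (hns : IsNumericalSemigroup S) (hm : multiplicityNS S = m) :
    IsMIrreducibleNS m S ↔
      ∀ a b, IsSpecialGap S a → IsSpecialGap S b → m < a → m < b → a = b := by
  subst hm
  obtain ⟨hmS, -⟩ := hns.multiplicityNS_mem
  constructor
  · intro hirr a b ha hb hma hmb
    by_contra hab
    exact hirr ⟨adjoinSpecialGap S a ha, adjoinSpecialGap S b hb,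
      hns.adjoinSpecialGap, hns.adjoinSpecialGap,
      multiplicityNS_adjoinSpecialGap hns hma, multiplicityNS_adjoinSpecialGap hns hmb,
      (adjoinSpecialGap_inf_adjoinSpecialGap hab).symm, lt_adjoinSpecialGap, lt_adjoinSpecialGap⟩
  · rintro hgaps ⟨T₁, T₂, -, -, hm₁, hm₂, heq, h₁, h₂⟩
    obtain ⟨a, haT, b, hbT, hab, ha, hb⟩ := exists_isSpecialGap_ne_of_eq_inf hns heq h₁ h₂
    have above {T : AddSubmonoid ℕ} (hmT : multiplicityNS T = multiplicityNS S) {x : ℕ}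
        (hxT : x ∈ T) (hx : IsSpecialGap S x) : multiplicityNS S < x :=
      lt_of_le_of_ne (hmT ▸ multiplicityNS_le hxT hx.ne_zero) fun hx' => hx.1 (hx' ▸ hmS)
    exact hab (hgaps a b ha hb (above hm₁ haT ha) (above hm₂ hbT hb))

theorem IsIrreducibleNS.isMIrreducibleNS (hirr : IsIrreducibleNS S) : IsMIrreducibleNS m S :=
  fun ⟨T₁, T₂, hT₁, hT₂, _, _, hrest⟩ => hirr ⟨T₁, T₂, hT₁, hT₂, hrest⟩

end SpecialGaps

section MultiplicityFour

theorem mem_closure_4567 {x : ℕ} :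
    x ∈ AddSubmonoid.closure ({4, 5, 6, 7} : Set ℕ) ↔ x = 0 ∨ 4 ≤ x := by
  constructor
  · intro hx
    induction hx using AddSubmonoid.closure_induction with
    | mem y hy => simp only [Set.mem_insert_iff, Set.mem_singleton_iff] at hy; omega
    | zero => exact Or.inl rfl
    | add a b _ _ ha hb => omega
  · rintro (rfl | hx)
    · exact AddSubmonoid.zero_mem _
    · refine mem_of_forall_lt_add_mem (m := 4) (AddSubmonoid.subset_closure (by simp))
        (by norm_num) (a := 4) (fun i hi => AddSubmonoid.subset_closure ?_) x hx
      interval_cases i <;> simp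

theorem mem_closure_4679 {x : ℕ} :
    x ∈ AddSubmonoid.closure ({4, 6, 7, 9} : Set ℕ) ↔ x = 0 ∨ x = 4 ∨ 6 ≤ x := by
  constructor
  · intro hx
    induction hx using AddSubmonoid.closure_induction with
    | mem y hy => simp only [Set.mem_insert_iff, Set.mem_singleton_iff] at hy; omega
    | zero => exact Or.inl rfl
    | add a b _ _ ha hb => omega
  · have h4 : 4 ∈ AddSubmonoid.closure ({4, 6, 7, 9} : Set ℕ) :=
      AddSubmonoid.subset_closure (by simp)
    rintro (rfl | rfl | hx)
    · exact AddSubmonoid.zero_mem _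
    · exact h4
    · refine mem_of_forall_lt_add_mem h4 (by norm_num) (a := 6) (fun i hi => ?_) x hx
      interval_cases i
      · exact AddSubmonoid.subset_closure (by simp)
      · exact AddSubmonoid.subset_closure (by simp)
      · simpa using AddSubmonoid.add_mem _ h4 h4
      · exact AddSubmonoid.subset_closure (by simp)

variable {S : AddSubmonoid ℕ}

theorem eq_closure_of_isSpecialGap_three (hns : IsNumericalSemigroup S)
    (hmult : multiplicityNS S = 4) (h3 : IsSpecialGap S 3) :
    S = AddSubmonoid.closure {4, 5, 6, 7} ∨ S = AddSubmonoid.closure {4, 6, 7, 9} := by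
  have h4 : 4 ∈ S := hmult ▸ hns.multiplicityNS_mem.1
  have hge (x : ℕ) (hx : x ∈ S) : x = 0 ∨ 4 ≤ x :=
    (eq_or_ne x 0).imp_right fun hx0 => hmult ▸ multiplicityNS_le hx hx0
  have h6 : 6 ∈ S := h3.2.1
  have h7 : 7 ∈ S := h3.2.2 4 h4 (by norm_num)
  have h8 : 8 ∈ S := S.add_mem h4 h4
  have h9 : 9 ∈ S := h3.2.2 6 h6 (by norm_num)
  have hlarge : ∀ x, 6 ≤ x → x ∈ S :=
    mem_of_forall_lt_add_mem h4 (by norm_num) fun i hi => by interval_cases i <;> assumption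
  by_cases h5 : 5 ∈ S
  · refine Or.inl (AddSubmonoid.ext fun x =>
      ⟨fun hx => mem_closure_4567.mpr (hge x hx), fun hx => ?_⟩)
    rcases mem_closure_4567.mp hx with rfl | hx
    · exact S.zero_mem
    · rcases (by omega : x = 4 ∨ x = 5 ∨ 6 ≤ x) with rfl | rfl | hx
      exacts [h4, h5, hlarge x hx]
  · refine Or.inr (AddSubmonoid.ext fun x => ⟨fun hx => mem_closure_4679.mpr ?_, fun hx => ?_⟩)
    · have hx5 : x ≠ 5 := fun h => h5 (h ▸ hx)
      have := hge x hx
      omega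
    · rcases mem_closure_4679.mp hx with rfl | rfl | hx
      exacts [S.zero_mem, h4, hlarge x hx]

theorem exists_mem_iff_of_isSpecialGap_two (hns : IsNumericalSemigroup S)
    (hmult : multiplicityNS S = 4) (h2 : IsSpecialGap S 2) :
    ∃ c, 5 ≤ c ∧ c % 2 = 1 ∧
      ∀ x, x ∈ S ↔ x = 0 ∨ (x % 2 = 0 ∧ 4 ≤ x) ∨ (x % 2 = 1 ∧ c ≤ x) := by
  have h4 : 4 ∈ S := hmult ▸ hns.multiplicityNS_mem.1
  have hge (x : ℕ) (hx : x ∈ S) (hx0 : x ≠ 0) : 4 ≤ x := hmult ▸ multiplicityNS_le hx hx0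
  have hodd : ∃ x, x ∈ S ∧ x % 2 = 1 := by
    obtain ⟨N, hN⟩ := hns.exists_forall_ge_mem
    exact ⟨2 * N + 1, hN _ (by omega), by omega⟩
  classical
  obtain ⟨hcS, hc⟩ := Nat.find_spec hodd
  have hc4 := hge _ hcS (by omega)
  refine ⟨Nat.find hodd, by omega, hc, fun x => ⟨fun hx => ?_, ?_⟩⟩
  · rcases Nat.even_or_odd' x with ⟨k, rfl | rfl⟩
    · rcases eq_or_ne k 0 with rfl | hk
      · exact Or.inl rfl
      · have := hge _ hx (by omega)
        omega
    · have := Nat.find_min' hodd ⟨hx, by omega⟩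
      omega
  · rintro (rfl | ⟨hx2, hx⟩ | ⟨hx2, hx⟩)
    · exact S.zero_mem
    · simpa [show 4 + (x - 4) / 2 * 2 = x by omega] using
        h2.add_mul_mem h4 (by norm_num) ((x - 4) / 2)
    · simpa [show Nat.find hodd + (x - Nat.find hodd) / 2 * 2 = x by omega] using
        h2.add_mul_mem hcS (by omega) ((x - Nat.find hodd) / 2)

theorem eq_closure_or_exists_of_isSpecialGap_two (hns : IsNumericalSemigroup S)
    (hmult : multiplicityNS S = 4) (h2 : IsSpecialGap S 2) :
    S = AddSubmonoid.closure {4, 5, 6, 7} ∨ S = AddSubmonoid.closure {4, 6, 7, 9} ∨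
      ∃ a b, IsSpecialGap S a ∧ IsSpecialGap S b ∧ 4 < a ∧ 4 < b ∧ a ≠ b := by
  obtain ⟨c, hc5, hc, hS⟩ := exists_mem_iff_of_isSpecialGap_two hns hmult h2
  rcases (by omega : c = 5 ∨ c = 7 ∨ 9 ≤ c) with rfl | rfl | hc9
  · exact Or.inl (AddSubmonoid.ext fun x => by rw [hS, mem_closure_4567]; omega)
  · exact Or.inr (Or.inl (AddSubmonoid.ext fun x => by rw [hS, mem_closure_4679]; omega))
  · have gap (h : ℕ) (hh : h % 2 = 1) (hlt : h < c) (hle : c ≤ h + 4) : IsSpecialGap S h := by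
      refine ⟨?_, ?_, fun s hs hs0 => ?_⟩ <;> simp only [hS] at * <;> omega
    exact Or.inr (Or.inr ⟨c - 4, c - 2, gap _ (by omega) (by omega) (by omega),
      gap _ (by omega) (by omega) (by omega), by omega, by omega, by omega⟩)

theorem eq_closure_or_exists_of_isSpecialGap_le_four (hns : IsNumericalSemigroup S)
    (hmult : multiplicityNS S = 4) {h : ℕ} (hh : IsSpecialGap S h) (h4 : h ≤ 4) :
    S = AddSubmonoid.closure {4, 5, 6, 7} ∨ S = AddSubmonoid.closure {4, 6, 7, 9} ∨
      ∃ a b, IsSpecialGap S a ∧ IsSpecialGap S b ∧ 4 < a ∧ 4 < b ∧ a ≠ b := by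
  have h2 : 2 ≤ h := by
    have := hmult ▸ multiplicityNS_le hh.2.1 (by have := hh.ne_zero; omega)
    omega
  have h4S : 4 ∈ S := hmult ▸ hns.multiplicityNS_mem.1
  rcases (by omega : h = 2 ∨ h = 3 ∨ h = 4) with rfl | rfl | rfl
  · exact eq_closure_or_exists_of_isSpecialGap_two hns hmult hh
  · exact (eq_closure_of_isSpecialGap_three hns hmult hh).imp_right Or.inl
  · exact absurd h4S hh.1

end MultiplicityFour

/-- a numerical semigroup of multiplicity `4` is `4`-irreducible
iff it is `⟨4,5,6,7⟩`, or `⟨4,6,7,9⟩`, or an irreducible numerical semigroup. -/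
theorem stmt19 (S : AddSubmonoid ℕ)
    (hns : IsNumericalSemigroup S) (hmult : multiplicityNS S = 4) :
    IsMIrreducibleNS 4 S ↔
      (S = AddSubmonoid.closure {4, 5, 6, 7} ∨
       S = AddSubmonoid.closure {4, 6, 7, 9} ∨
       IsIrreducibleNS S) := by
  have hiff := isMIrreducibleNS_iff hns hmult
  constructor
  · intro hS
    by_contra! ⟨hS₁, hS₂, hred⟩
    obtain ⟨a, b, hab, ha, hb⟩ := exists_isSpecialGap_ne_of_not_isIrreducibleNS hns hred
    obtain ⟨h, hh, h4⟩ : ∃ h, IsSpecialGap S h ∧ h ≤ 4 := by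
      by_contra! hbig
      exact hab (hiff.mp hS a b ha hb (hbig a ha) (hbig b hb))
    rcases eq_closure_or_exists_of_isSpecialGap_le_four hns hmult hh h4 with
      h | h | ⟨a, b, ha, hb, h4a, h4b, hab⟩
    exacts [hS₁ h, hS₂ h, hab (hiff.mp hS a b ha hb h4a h4b)]
  · rintro (rfl | rfl | hirr)
    · exact hiff.mpr fun a b ha _ h4a _ => absurd (mem_closure_4567.mpr (Or.inr h4a.le)) ha.1
    · refine hiff.mpr fun a b ha hb h4a h4b => ?_
      have := mt mem_closure_4679.mpr ha.1
      have := mt mem_closure_4679.mpr hb.1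
      omega
    · exact hirr.isMIrreducibleNS
end
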